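/- For uniformly distributed samples on a rectangle [0,a] × [0,b] ⊆ ℝ², the probability that a uniform sample lies within Euclidean distance r of a fixed point x in the rectangle is at least min(1, πr²/(4ab)); i.e., the quarter-disk of radius r centered at any point of the rectangle intersected with the rectangle has area at least min(ab, πr²/4) when r ≤ min(a,b). -/

import Mathlib

/-!
Slice the region vertically. Over the abscissa `u`, the disk of radius `r` about `x` is the
interval of half-length `w u = √(r² - (u - x₀)²)` about `x₁`; as `w u ≤ r ≤ b` and `x₁ ∈ [0, b]`,
its part inside `[0, b]` still has length at least `w u`. Integrating over `u ∈ [0, a]` gives at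
least `∫_{-x₀}^{a-x₀} √(r² - t²) dt`. The integrand is even and decreasing in `|t|`, and the two
half-lengths `x₀` and `a - x₀` add up to `a ≥ r`, so this is at least
`∫_0^r √(r² - t²) dt = π r² / 4 ≤ a b`.
-/

open MeasureTheory Set Real intervalIntegral

theorem integral_le_integral_add_integral_of_antitoneOn {f : ℝ → ℝ} {r α β : ℝ}
    (hf : AntitoneOn f (Ici 0)) (hf0 : 0 ≤ f) (hα : 0 ≤ α) (hβ : 0 ≤ β) (hr : 0 ≤ r)
    (hrαβ : r ≤ α + β) :
    ∫ t in (0:ℝ)..r, f t ≤ (∫ t in (0:ℝ)..α, f t) + ∫ t in (0:ℝ)..β, f t := by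
  have hfi : ∀ {c d : ℝ}, 0 ≤ c → 0 ≤ d → IntervalIntegrable f volume c d := fun hc hd =>
    (hf.mono fun _ ht => (le_min hc hd).trans ht.1).intervalIntegrable
  have hα_nonneg : 0 ≤ ∫ t in (0:ℝ)..α, f t := integral_nonneg hα fun t _ => hf0 t
  rcases le_total r β with hrβ | hβr
  · have hmono := integral_mono_interval le_rfl hr hrβ (.of_forall hf0) (hfi le_rfl hβ)
    linarith
  · have htail : ∫ t in β..r, f t ≤ ∫ t in (0:ℝ)..α, f t :=
      calc ∫ t in β..r, f t = ∫ t in (0:ℝ)..(r - β), f (t + β) := by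
            rw [integral_comp_add_right, zero_add, sub_add_cancel]
        _ ≤ ∫ t in (0:ℝ)..(r - β), f t := by
            refine integral_mono_on (sub_nonneg.2 hβr) ?_ (hfi le_rfl (sub_nonneg.2 hβr)) ?_
            · simpa using (hfi hβ hr).comp_add_right β
            · exact fun t ht => hf ht.1 (add_nonneg ht.1 hβ) (le_add_of_nonneg_right hβ)
        _ ≤ ∫ t in (0:ℝ)..α, f t :=
            integral_mono_interval le_rfl (sub_nonneg.2 hβr) (by linarith) (.of_forall hf0)
              (hfi le_rfl hα)
    rw [← integral_add_adjacent_intervals (hfi le_rfl hβ) (hfi hβ hr)]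
    linarith

theorem Function.Even.intervalIntegral_neg_zero {f : ℝ → ℝ} (heven : Function.Even f) (c : ℝ) :
    ∫ t in (-c)..0, f t = ∫ t in (0:ℝ)..c, f t := by
  simpa [heven _] using (integral_comp_neg (a := 0) (b := c) f).symm

theorem integral_le_integral_comp_sub_of_even {f : ℝ → ℝ} {r a c : ℝ}
    (hf : AntitoneOn f (Ici 0)) (hf0 : 0 ≤ f) (heven : Function.Even f) (hc : c ∈ Icc 0 a)
    (hr : 0 ≤ r) (hra : r ≤ a) :
    ∫ t in (0:ℝ)..r, f t ≤ ∫ u in (0:ℝ)..a, f (u - c) := by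
  have hfi : ∀ {d : ℝ}, 0 ≤ d → IntervalIntegrable f volume 0 d := fun hd =>
    (hf.mono fun _ ht => (le_min le_rfl hd).trans ht.1).intervalIntegrable
  have hneg_int : IntervalIntegrable f volume (-c) 0 :=
    (IntervalIntegrable.iff_comp_neg).2 (by simpa [heven _] using (hfi hc.1).symm)
  rw [integral_comp_sub_right, zero_sub,
    ← integral_add_adjacent_intervals hneg_int (hfi (sub_nonneg.2 hc.2)),
    heven.intervalIntegral_neg_zero]
  exact integral_le_integral_add_integral_of_antitoneOn hf hf0 hc.1 (sub_nonneg.2 hc.2) hr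
    (by linarith)

theorem integral_sqrt_sq_sub_sq {r : ℝ} (hr : 0 < r) :
    ∫ t in (0:ℝ)..r, √(r ^ 2 - t ^ 2) = π * r ^ 2 / 4 := by
  have hunit : ∫ s in (0:ℝ)..1, √(1 - s ^ 2) = π / 4 := by
    have hc : Continuous fun s : ℝ => √(1 - s ^ 2) := by fun_prop
    have hsplit := integral_add_adjacent_intervals (hc.intervalIntegrable (μ := volume) (-1) 0)
      (hc.intervalIntegrable 0 1)
    have heven : Function.Even fun s : ℝ => √(1 - s ^ 2) := fun s => by simp only [neg_sq]
    rw [integral_sqrt_one_sub_sq, heven.intervalIntegral_neg_zero] at hsplit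
    linarith
  have hscale : ∀ s : ℝ, √(r ^ 2 - (r * s) ^ 2) = r * √(1 - s ^ 2) := fun s => by
    rw [show r ^ 2 - (r * s) ^ 2 = r ^ 2 * (1 - s ^ 2) by ring, sqrt_mul (sq_nonneg r),
      sqrt_sq hr.le]
  have h := integral_comp_mul_left (a := 0) (b := 1) (fun t => √(r ^ 2 - t ^ 2)) hr.ne'
  simp only [hscale, intervalIntegral.integral_const_mul, hunit, mul_zero, mul_one,
    smul_eq_mul] at h
  field_simp at h
  linarith

theorem ofReal_le_volume_ball_inter_Icc {b c w : ℝ} (hc : c ∈ Icc 0 b) (hw : 0 ≤ w)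
    (hwb : w ≤ b) : ENNReal.ofReal w ≤ volume (Metric.ball c w ∩ Icc 0 b) := by
  have hlen : w ≤ min (c + w) b - max (c - w) 0 := by
    rcases max_cases (c - w) 0 with h1 | h1 <;> rcases min_cases (c + w) b with h2 | h2 <;>
      linarith [hc.1, hc.2]
  calc ENNReal.ofReal w ≤ volume (Ioo (max (c - w) 0) (min (c + w) b)) := by
        rw [Real.volume_Ioo]; exact ENNReal.ofReal_le_ofReal hlen
    _ = volume (Metric.ball c w ∩ Ioo 0 b) := by rw [Real.ball_eq_Ioo, Ioo_inter_Ioo]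
    _ ≤ volume (Metric.ball c w ∩ Icc 0 b) := by gcongr; exact Ioo_subset_Icc_self

theorem ofReal_le_volume_disk_inter_rectangle {a b r : ℝ} {c : ℝ × ℝ}
    (hc : c ∈ Icc 0 a ×ˢ Icc 0 b) (hr : 0 < r) (hra : r ≤ a) (hrb : r ≤ b) :
    ENNReal.ofReal (π * r ^ 2 / 4) ≤
      volume ({z : ℝ × ℝ | (z.1 - c.1) ^ 2 + (z.2 - c.2) ^ 2 < r ^ 2} ∩ Icc 0 a ×ˢ Icc 0 b) := by
  set S := {z : ℝ × ℝ | (z.1 - c.1) ^ 2 + (z.2 - c.2) ^ 2 < r ^ 2} ∩ Icc 0 a ×ˢ Icc 0 b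
  set w : ℝ → ℝ := fun u => √(r ^ 2 - (u - c.1) ^ 2)
  have hS : MeasurableSet S :=
    (measurableSet_lt (by fun_prop) measurable_const).inter
      (measurableSet_Icc.prod measurableSet_Icc)
  have hslice : ∀ u ∈ Icc 0 a, ENNReal.ofReal (w u) ≤ volume (Prod.mk u ⁻¹' S) := by
    intro u hu
    have hwb : w u ≤ b := ((sqrt_le_left hr.le).2 (sub_le_self _ (sq_nonneg _))).trans hrb
    refine (ofReal_le_volume_ball_inter_Icc hc.2 (sqrt_nonneg _) hwb).trans (measure_mono ?_)
    rintro v ⟨hv, hvb⟩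
    rw [Metric.mem_ball, Real.dist_eq, lt_sqrt (abs_nonneg _), sq_abs] at hv
    exact ⟨by simp only [mem_ofPred_eq]; linarith, hu, hvb⟩
  have hw : Continuous w := by fun_prop
  calc ENNReal.ofReal (π * r ^ 2 / 4)
        = ENNReal.ofReal (∫ t in (0:ℝ)..r, √(r ^ 2 - t ^ 2)) := by rw [integral_sqrt_sq_sub_sq hr]
    _ ≤ ENNReal.ofReal (∫ u in (0:ℝ)..a, w u) := by
        refine ENNReal.ofReal_le_ofReal
          (integral_le_integral_comp_sub_of_even ?_ ?_ ?_ hc.1 hr.le hra)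
        · exact fun s hs t _ hst => sqrt_le_sqrt (sub_le_sub_left (pow_le_pow_left₀ hs hst 2) _)
        · exact fun t => sqrt_nonneg _
        · exact fun t => by simp only [neg_sq]
    _ = ∫⁻ u in Icc 0 a, ENNReal.ofReal (w u) := by
        rw [integral_of_le (hr.le.trans hra), ← integral_Icc_eq_integral_Ioc,
          ofReal_integral_eq_lintegral_ofReal hw.integrableOn_Icc
            (.of_forall fun u => sqrt_nonneg _)]
    _ ≤ ∫⁻ u in Icc 0 a, volume (Prod.mk u ⁻¹' S) := setLIntegral_mono' measurableSet_Icc hslice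
    _ ≤ ∫⁻ u, volume (Prod.mk u ⁻¹' S) := setLIntegral_le_lintegral _ _
    _ = volume S := by rw [Measure.volume_eq_prod, Measure.prod_apply hS]

theorem EuclideanSpace.ofReal_le_volume_ball_inter_rectangle {a b r : ℝ}
    {x : EuclideanSpace ℝ (Fin 2)} (hx : x 0 ∈ Icc 0 a ∧ x 1 ∈ Icc 0 b) (hr : 0 < r)
    (hra : r ≤ a) (hrb : r ≤ b) :
    ENNReal.ofReal (π * r ^ 2 / 4) ≤
      volume (Metric.ball x r ∩
        {p : EuclideanSpace ℝ (Fin 2) | p 0 ∈ Icc 0 a ∧ p 1 ∈ Icc 0 b}) := by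
  let e := (MeasurableEquiv.toLp 2 (Fin 2 → ℝ)).symm.trans MeasurableEquiv.finTwoArrow
  have he : MeasurePreserving e volume volume := (volume_preserving_finTwoArrow ℝ).comp
    (EuclideanSpace.volume_preserving_symm_measurableEquiv_toLp _)
  have hpre : Metric.ball x r ∩ {p : EuclideanSpace ℝ (Fin 2) | p 0 ∈ Icc 0 a ∧ p 1 ∈ Icc 0 b} =
      e ⁻¹' ({z : ℝ × ℝ | (z.1 - x 0) ^ 2 + (z.2 - x 1) ^ 2 < r ^ 2} ∩ Icc 0 a ×ˢ Icc 0 b) := by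
    ext p
    simp only [mem_inter_iff, Metric.mem_ball, EuclideanSpace.dist_eq, Fin.sum_univ_two,
      Real.dist_eq, sq_abs, sqrt_lt' hr, mem_preimage, mem_prod, e, MeasurableEquiv.trans_apply,
      MeasurableEquiv.finTwoArrow_apply, MeasurableEquiv.coe_toLp_symm]
    rfl
  rw [hpre, he.measure_preimage_equiv]
  exact ofReal_le_volume_disk_inter_rectangle (c := (x 0, x 1)) hx hr hra hrb

theorem rectangle_ball_area_bound_general
    (a b r : ℝ) (hr0 : 0 < r) (hr : r ≤ min a b)
    (R : Set (EuclideanSpace ℝ (Fin 2)))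
    (hR : R = {p : EuclideanSpace ℝ (Fin 2) |
      p 0 ∈ Set.Icc (0:ℝ) a ∧ p 1 ∈ Set.Icc (0:ℝ) b})
    (x : EuclideanSpace ℝ (Fin 2)) (hx : x ∈ R) :
    ENNReal.ofReal (min (a * b) (Real.pi * r ^ 2 / 4)) ≤
      volume (Metric.ball x r ∩ R) := by
  subst hR
  have hra : r ≤ a := hr.trans (min_le_left a b)
  have hrb : r ≤ b := hr.trans (min_le_right a b)
  have hquarter : π * r ^ 2 / 4 ≤ a * b := by
    nlinarith [pi_le_four, mul_le_mul hra hrb hr0.le (hr0.le.trans hra)]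
  rw [min_eq_right hquarter]
  exact EuclideanSpace.ofReal_le_volume_ball_inter_rectangle hx hr0 hra hrb

/-- In a rectangle `[0,a] × [0,b]`, the area of the intersection of the rectangle
with a Euclidean ball of radius `r ≤ min a b` centered at any point of the
rectangle is at least `min (a·b) (π r²/4)`. -/
theorem rectangle_ball_area_bound
    (a b r : ℝ) (ha : 0 < a) (hb : 0 < b) (hr0 : 0 < r) (hr : r ≤ min a b)
    (R : Set (EuclideanSpace ℝ (Fin 2)))
    (hR : R = {p : EuclideanSpace ℝ (Fin 2) |
      p 0 ∈ Set.Icc (0:ℝ) a ∧ p 1 ∈ Set.Icc (0:ℝ) b})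
    (x : EuclideanSpace ℝ (Fin 2)) (hx : x ∈ R) :
    ENNReal.ofReal (min (a * b) (Real.pi * r ^ 2 / 4)) ≤
      volume (Metric.ball x r ∩ R) :=
  rectangle_ball_area_bound_general a b r hr0 hr R hR x hx
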